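/- arXiv:1711.01312 — 2 statements merged into one kernel-verified Lean document; each statement's English description precedes it below -/
import Mathlib

section
/- π₀*(x) := f_{P|X}(1|x) is the worst-case null proportion: for every threshold rule t, FDP(t, f_{PX}, π₀) ≤ FDP(t, f_{PX}, π₀*) for all π₀ ∈ S(f_{PX}), and consequently the minimax problem max_t min_{π₀∈S} P_D subject to max_{π₀∈S} FDP ≤ α reduces to max_t P_D(t, f_{PX}) subject to FDP(t, f_{PX}, π₀*) ≤ α. -/
open MeasureTheory

/-- `π₀*(x) := f_{P|X}(1|x)` is the worst-case null proportion: for every threshold rule `t`,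
`FDP(t, π₀) ≤ FDP(t, π₀*)` for all feasible `π₀ ∈ S(f_{PX}) = {π₀ : ∀x, 0 ≤ π₀(x) ≤ f1(x)}`,
and consequently the robust constraint `max_{π₀ ∈ S} FDP(t, π₀) ≤ α` is equivalent to the
single constraint `FDP(t, π₀*) ≤ α`.  Here `P_FD(t, π₀) = ∫ t(x) π₀(x) dμ(x)`,
`FDP = P_FD / P_D`, and `P_D > 0` does not depend on `π₀`. -/
theorem worst_case_null_proportion
    {𝒳 : Type*} [MeasurableSpace 𝒳] (μ : Measure 𝒳)
    (t f1 : 𝒳 → ℝ) (ht : ∀ x, 0 ≤ t x) (hf1 : ∀ x, 0 ≤ f1 x)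
    (hint : Integrable (fun x => t x * f1 x) μ)
    (PD α : ℝ) (hPD : 0 < PD) :
    (∀ π₀ : 𝒳 → ℝ, (∀ x, 0 ≤ π₀ x ∧ π₀ x ≤ f1 x) →
        Integrable (fun x => t x * π₀ x) μ →
        (∫ x, t x * π₀ x ∂μ) / PD ≤ (∫ x, t x * f1 x ∂μ) / PD) ∧
    ((∀ π₀ : 𝒳 → ℝ, (∀ x, 0 ≤ π₀ x ∧ π₀ x ≤ f1 x) →
        Integrable (fun x => t x * π₀ x) μ →
        (∫ x, t x * π₀ x ∂μ) / PD ≤ α)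
      ↔ (∫ x, t x * f1 x ∂μ) / PD ≤ α) := by
  have key : ∀ π₀ : 𝒳 → ℝ, (∀ x, 0 ≤ π₀ x ∧ π₀ x ≤ f1 x) →
      Integrable (fun x => t x * π₀ x) μ →
      (∫ x, t x * π₀ x ∂μ) / PD ≤ (∫ x, t x * f1 x ∂μ) / PD := by
    intro π₀ hπ hip
    gcongr ?_ / _
    exact integral_mono hip hint fun x =>
      mul_le_mul_of_nonneg_left (hπ x).2 (ht x)
  refine ⟨key, ⟨fun h => h f1 (fun x => ⟨hf1 x, le_refl _⟩) hint,
    fun h π₀ hπ hip => le_trans (key π₀ hπ hip) h⟩⟩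
end

section
/- (Scaling monotonicity of population FDP) In the population model with worst-case null π₀*, the map γ ↦ FDP(γ·t, f_{PX}, π₀*) is monotonically non-decreasing in γ > 0, provided f_{P|X}(p|x) is non-increasing in p for each x. -/
open MeasureTheory

lemma avg_antitone (g : ℝ → ℝ) (hg : ∀ p, 0 ≤ g p)
    (ha : AntitoneOn g (Set.Ioi (0 : ℝ))) {A B : ℝ} (hA : 0 < A) (hAB : A ≤ B) :
    A * ∫ p in Set.Ioc (0 : ℝ) B, g p ≤ B * ∫ p in Set.Ioc (0 : ℝ) A, g p := by
  have hnonnegA : 0 ≤ ∫ p in Set.Ioc (0 : ℝ) A, g p :=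
    setIntegral_nonneg measurableSet_Ioc fun p _ => hg p
  by_cases hint : IntegrableOn g (Set.Ioc (0 : ℝ) B)
  · have hintA : IntegrableOn g (Set.Ioc (0 : ℝ) A) :=
      hint.mono_set (Set.Ioc_subset_Ioc_right hAB)
    have hintAB : IntegrableOn g (Set.Ioc A B) :=
      hint.mono_set (Set.Ioc_subset_Ioc_left hA.le)
    have hsplit : ∫ p in Set.Ioc (0 : ℝ) B, g p
        = (∫ p in Set.Ioc (0 : ℝ) A, g p) + ∫ p in Set.Ioc A B, g p := by
      rw [← setIntegral_union (Set.Ioc_disjoint_Ioc_of_le le_rfl) measurableSet_Ioc hintA hintAB,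
        Set.Ioc_union_Ioc_eq_Ioc hA.le hAB]
    have h1 : ∫ p in Set.Ioc A B, g p ≤ (B - A) * g A := by
      calc ∫ p in Set.Ioc A B, g p ≤ ∫ _p in Set.Ioc A B, g A :=
            setIntegral_mono_on hintAB (integrableOn_const measure_Ioc_lt_top.ne)
              measurableSet_Ioc (fun p hp => ha hA (hA.trans hp.1) hp.1.le)
        _ = (B - A) * g A := by
            rw [setIntegral_const, Real.volume_real_Ioc_of_le (by linarith), smul_eq_mul]
    have h2 : A * g A ≤ ∫ p in Set.Ioc (0 : ℝ) A, g p := by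
      calc A * g A = ∫ _p in Set.Ioc (0 : ℝ) A, g A := by
            rw [setIntegral_const, Real.volume_real_Ioc_of_le (by linarith), smul_eq_mul, sub_zero]
        _ ≤ ∫ p in Set.Ioc (0 : ℝ) A, g p :=
            setIntegral_mono_on (integrableOn_const measure_Ioc_lt_top.ne) hintA
              measurableSet_Ioc (fun p hp => ha hp.1 hA hp.2)
    rw [hsplit]
    nlinarith [hg A, hA.le, sub_nonneg.2 hAB]
  · rw [integral_undef hint, mul_zero]
    exact mul_nonneg (hA.le.trans hAB) hnonnegA

/-- Scaling monotonicity of the population FDP under the worst-case null `π₀*`. Since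
`P_FD(γt, π₀*) = γ · ∫ t(x) f(1,x) dν(x)` and `P_D(γt) = ∫∫_{0<p≤γt(x)} f(p,x) dp dν(x)`
with `f(·,x)` non-increasing in `p`, the map
`γ ↦ FDP(γt) = (γ · ∫ t(x) f(1,x) dν) / P_D(γt)` is non-decreasing on `γ > 0`. -/
theorem fdp_scaling_monotone
    {𝒳 : Type*} [MeasurableSpace 𝒳] (ν : Measure 𝒳)
    (f : ℝ → 𝒳 → ℝ) (t : 𝒳 → ℝ)
    (hf_nonneg : ∀ p x, 0 ≤ f p x)
    (hf_anti : ∀ x, AntitoneOn (fun p => f p x) (Set.Ioi (0 : ℝ)))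
    (ht : ∀ x, t x ∈ Set.Ioo (0 : ℝ) 1)
    (hPD_pos : ∀ γ : ℝ, 0 < γ →
      0 < ∫ x, (∫ p in Set.Ioc (0 : ℝ) (γ * t x), f p x) ∂ν) :
    MonotoneOn (fun γ : ℝ =>
        (γ * ∫ x, t x * f 1 x ∂ν)
          / (∫ x, (∫ p in Set.Ioc (0 : ℝ) (γ * t x), f p x) ∂ν))
      (Set.Ioi (0 : ℝ)) := by
  intro γ₁ h₁ γ₂ h₂ h₁₂
  simp only [Set.mem_Ioi] at h₁ h₂
  set c := ∫ x, t x * f 1 x ∂ν with hc_def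
  have hc : 0 ≤ c :=
    integral_nonneg fun x => mul_nonneg (ht x).1.le (hf_nonneg 1 x)
  set D₁ := ∫ x, (∫ p in Set.Ioc (0 : ℝ) (γ₁ * t x), f p x) ∂ν with hD1_def
  set D₂ := ∫ x, (∫ p in Set.Ioc (0 : ℝ) (γ₂ * t x), f p x) ∂ν with hD2_def
  have hD1 : 0 < D₁ := hPD_pos γ₁ h₁
  have hD2 : 0 < D₂ := hPD_pos γ₂ h₂
  have hI1 : Integrable (fun x => ∫ p in Set.Ioc (0 : ℝ) (γ₁ * t x), f p x) ν := by
    by_contra h; rw [hD1_def, integral_undef h] at hD1; exact lt_irrefl 0 hD1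
  have hI2 : Integrable (fun x => ∫ p in Set.Ioc (0 : ℝ) (γ₂ * t x), f p x) ν := by
    by_contra h; rw [hD2_def, integral_undef h] at hD2; exact lt_irrefl 0 hD2
  have hpt : ∀ x, γ₁ * ∫ p in Set.Ioc (0 : ℝ) (γ₂ * t x), f p x
      ≤ γ₂ * ∫ p in Set.Ioc (0 : ℝ) (γ₁ * t x), f p x := by
    intro x
    have hA : 0 < γ₁ * t x := mul_pos h₁ (ht x).1
    have hAB : γ₁ * t x ≤ γ₂ * t x := mul_le_mul_of_nonneg_right h₁₂ (ht x).1.le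
    have := avg_antitone (fun p => f p x) (fun p => hf_nonneg p x) (hf_anti x) hA hAB
    refine le_of_mul_le_mul_left ?_ (ht x).1
    calc t x * (γ₁ * ∫ p in Set.Ioc (0 : ℝ) (γ₂ * t x), f p x)
        = γ₁ * t x * ∫ p in Set.Ioc (0 : ℝ) (γ₂ * t x), f p x := by ring
      _ ≤ γ₂ * t x * ∫ p in Set.Ioc (0 : ℝ) (γ₁ * t x), f p x := this
      _ = t x * (γ₂ * ∫ p in Set.Ioc (0 : ℝ) (γ₁ * t x), f p x) := by ring
  have key : γ₁ * D₂ ≤ γ₂ * D₁ := by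
    rw [hD1_def, hD2_def, ← integral_const_mul, ← integral_const_mul]
    exact integral_mono (hI2.const_mul γ₁) (hI1.const_mul γ₂) hpt
  simp only
  rw [div_le_div_iff₀ hD1 hD2]
  nlinarith [mul_le_mul_of_nonneg_left key hc]
end
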